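/- Centered leverage score decay: let v_i = √(q_i)(φ_i - φ̄) with q_i ≥ q_min > 0 and ‖v_i‖² ≤ L for all candidates i; let H_n = γI + α Σ_{t=1}^n v_{i_t} v_{i_t}^⊤ be built greedily with α, γ > 0, and suppose (diversity) v_i^⊤ H_{k-1}^{-1} v_i ≤ κ · v_{i_k}^⊤ H_{k-1}^{-1} v_{i_k} for all i and all k, and (Fisher compatibility) Σ_n ⪰ ρ H_n for some ρ ∈ (0,1] with Σ_n positive definite. Then for every candidate i, (φ_i - φ̄)^⊤ Σ_n^{-1} (φ_i - φ̄) ≤ (κ/(ρ q_min)) · ((1 + αL/γ)/α) · (d/n) · log(1 + α n L/(γ d)). -/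

import Mathlib

/-!
Put `Y = vᵢᵀ Hₙ⁻¹ vᵢ`. Inversion is antitone in the Loewner order, so Fisher compatibility gives
`(φᵢ - φ̄)ᵀ Σₙ⁻¹ (φᵢ - φ̄) = vᵢᵀ Σₙ⁻¹ vᵢ / qᵢ ≤ Y / (ρ q_min)`, and since every `H_{k-1} ≤ Hₙ`,
diversity gives `n Y ≤ κ ∑ₖ eₖ` with `eₖ = v_{iₖ}ᵀ H_{k-1}⁻¹ v_{iₖ}`. By the matrix determinant
lemma `log (1 + α eₖ)` is the increment of `log det` from `H_{k-1}` to `H_k`, and `eₖ ≤ L / γ`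
turns `α eₖ` into at most `(1 + α L / γ) log (1 + α eₖ)`. The telescoped sum
`log det Hₙ - log det H₀` is at most `d log (1 + α n L / (γ d))` by AM-GM on the eigenvalues of
`Hₙ`, whose trace is at most `γ d + α n L`.
-/

open scoped Matrix MatrixOrder ComplexOrder
open Finset Matrix

theorem Real.sum_log_le_card_mul_log_sum_div {ι : Type*} [Fintype ι] [Nonempty ι] {f : ι → ℝ}
    (hf : ∀ i, 0 < f i) :
    ∑ i, Real.log (f i) ≤ Fintype.card ι * Real.log ((∑ i, f i) / Fintype.card ι) := by
  have hc : (0 : ℝ) < Fintype.card ι := by exact_mod_cast Fintype.card_pos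
  have hjensen := strictConcaveOn_log_Ioi.concaveOn.le_map_sum (t := univ)
    (w := fun _ => (Fintype.card ι : ℝ)⁻¹) (p := f) (fun _ _ => by positivity)
    (by simp [hc.ne']) (fun i _ => hf i)
  simp only [smul_eq_mul, inv_mul_eq_div, ← sum_div] at hjensen
  calc ∑ i, Real.log (f i) = Fintype.card ι * ((∑ i, Real.log (f i)) / Fintype.card ι) := by
        field_simp
    _ ≤ _ := mul_le_mul_of_nonneg_left hjensen hc.le

theorem Real.le_mul_log_one_add {x c : ℝ} (hx : 0 ≤ x) (hxc : x ≤ c) :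
    x ≤ (1 + c) * Real.log (1 + x) := by
  have hx1 : 0 < 1 + x := by linarith
  have hlog : x / (1 + x) ≤ Real.log (1 + x) := by
    have := Real.one_sub_inv_le_log_of_pos hx1
    rwa [show 1 - (1 + x)⁻¹ = x / (1 + x) by field_simp; ring] at this
  calc x = (1 + x) * (x / (1 + x)) := by field_simp
    _ ≤ (1 + x) * Real.log (1 + x) := by gcongr
    _ ≤ (1 + c) * Real.log (1 + x) := by gcongr; exact Real.log_nonneg (by linarith)

namespace Matrix

variable {m : Type*}

theorem PosDef.of_le {𝕜 : Type*} [RCLike 𝕜] {A B : Matrix m m 𝕜} (hA : A.PosDef) (hAB : A ≤ B) :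
    B.PosDef := by
  simpa using hA.add_posSemidef hAB

variable [Fintype m] [DecidableEq m]

theorem det_add_vecMulVec {R : Type*} [CommRing R] {A : Matrix m m R} (hA : IsUnit A.det)
    (u v : m → R) : (A + vecMulVec u v).det = A.det * (1 + v ⬝ᵥ A⁻¹ *ᵥ u) := by
  rw [vecMulVec_eq (ι := Unit), det_add_replicateCol_mul_replicateRow hA, Matrix.mul_assoc,
    ← replicateCol_mulVec, replicateRow_mul_replicateCol]
  simp

variable {A B : Matrix m m ℝ}

-- `bᵀ A⁻¹ b = max_x (2 xᵀ b - xᵀ A x)`, attained at `x = A⁻¹ b`.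
theorem PosDef.two_mul_dotProduct_sub_dotProduct_mulVec_le (hA : A.PosDef) (x b : m → ℝ) :
    2 * (x ⬝ᵥ b) - x ⬝ᵥ A *ᵥ x ≤ b ⬝ᵥ A⁻¹ *ᵥ b := by
  set u := A⁻¹ *ᵥ b
  have hu : A *ᵥ u = b := by rw [mulVec_mulVec, mul_nonsing_inv _ hA.det_pos.ne'.isUnit, one_mulVec]
  have hsymm : u ⬝ᵥ A *ᵥ x = x ⬝ᵥ A *ᵥ u := by
    rw [dotProduct_mulVec, ← mulVec_transpose, ← conjTranspose_eq_transpose_of_trivial,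
      hA.isHermitian.eq, dotProduct_comm]
  have hsq : 0 ≤ (x - u) ⬝ᵥ A *ᵥ (x - u) := by
    simpa using hA.posSemidef.dotProduct_mulVec_nonneg (x - u)
  simp only [mulVec_sub, sub_dotProduct, dotProduct_sub, hsymm, hu] at hsq
  rw [dotProduct_comm u b] at hsq
  linarith

theorem PosDef.dotProduct_inv_mulVec_le_of_le (hA : A.PosDef) (hAB : A ≤ B) (b : m → ℝ) :
    b ⬝ᵥ B⁻¹ *ᵥ b ≤ b ⬝ᵥ A⁻¹ *ᵥ b := by
  have hB := PosDef.of_le hA hAB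
  set x := B⁻¹ *ᵥ b
  have hx : B *ᵥ x = b := by rw [mulVec_mulVec, mul_nonsing_inv _ hB.det_pos.ne'.isUnit, one_mulVec]
  have hAx : x ⬝ᵥ A *ᵥ x ≤ x ⬝ᵥ B *ᵥ x := by
    simpa [sub_mulVec] using hAB.dotProduct_mulVec_nonneg x
  calc b ⬝ᵥ B⁻¹ *ᵥ b = 2 * (x ⬝ᵥ b) - x ⬝ᵥ B *ᵥ x := by rw [hx, dotProduct_comm b]; ring
    _ ≤ 2 * (x ⬝ᵥ b) - x ⬝ᵥ A *ᵥ x := by linarith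
    _ ≤ b ⬝ᵥ A⁻¹ *ᵥ b := hA.two_mul_dotProduct_sub_dotProduct_mulVec_le x b

theorem PosDef.dotProduct_inv_mulVec_nonneg (hA : A.PosDef) (b : m → ℝ) :
    0 ≤ b ⬝ᵥ A⁻¹ *ᵥ b := by
  simpa using hA.inv.posSemidef.dotProduct_mulVec_nonneg b

theorem PosDef.dotProduct_inv_mulVec_le_of_smul_le (hA : A.PosDef) {c : ℝ} (hc : 0 < c)
    (hAB : c • A ≤ B) (b : m → ℝ) : b ⬝ᵥ B⁻¹ *ᵥ b ≤ (b ⬝ᵥ A⁻¹ *ᵥ b) / c := by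
  have hinv : (c • A)⁻¹ = c⁻¹ • A⁻¹ :=
    inv_eq_left_inv (by simp [smul_smul, hc.ne', nonsing_inv_mul _ hA.det_pos.ne'.isUnit])
  simpa [hinv, smul_mulVec, inv_mul_eq_div] using
    (hA.smul hc).dotProduct_inv_mulVec_le_of_le hAB b

theorem PosDef.log_det_le [Nonempty m] (hA : A.PosDef) :
    Real.log A.det ≤ Fintype.card m * Real.log (A.trace / Fintype.card m) := by
  rw [hA.isHermitian.det_eq_prod_eigenvalues, hA.isHermitian.trace_eq_sum_eigenvalues]
  simp only [RCLike.ofReal_real_eq_id, id]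
  rw [Real.log_prod fun i _ => (hA.eigenvalues_pos i).ne']
  exact Real.sum_log_le_card_mul_log_sum_div hA.eigenvalues_pos

end Matrix

section DesignMatrix

variable {m : Type*} [DecidableEq m] {n : ℕ} (γ α : ℝ) (w : Fin n → m → ℝ)

def designMatrix (k : ℕ) : Matrix m m ℝ :=
  γ • (1 : Matrix m m ℝ)
    + α • ∑ t ∈ univ.filter (fun t : Fin n => (t : ℕ) < k), vecMulVec (w t) (w t)

theorem designMatrix_zero : designMatrix γ α w 0 = γ • 1 := by
  simp [designMatrix]

theorem designMatrix_succ (k : Fin n) :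
    designMatrix γ α w (k + 1) = designMatrix γ α w k + α • vecMulVec (w k) (w k) := by
  have hfilter : univ.filter (fun t : Fin n => (t : ℕ) < k + 1)
      = insert k (univ.filter fun t : Fin n => (t : ℕ) < k) := by
    ext t
    simp only [mem_filter, mem_univ, true_and, mem_insert, Fin.ext_iff]
    omega
  rw [designMatrix, designMatrix, hfilter, sum_insert (by simp), smul_add]
  abel

variable {γ α} [Fintype m]

theorem designMatrix_mono (hα : 0 ≤ α) : Monotone (designMatrix γ α w) := by
  intro j k hjk
  unfold designMatrix
  gcongr
  exact fun t _ _ => (posSemidef_vecMulVec_self_star (w t)).nonneg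

theorem smul_one_le_designMatrix (hα : 0 ≤ α) (k : ℕ) : γ • 1 ≤ designMatrix γ α w k :=
  designMatrix_zero γ α w ▸ designMatrix_mono w hα (Nat.zero_le k)

theorem designMatrix_posDef (hγ : 0 < γ) (hα : 0 ≤ α) (k : ℕ) : (designMatrix γ α w k).PosDef :=
  (PosDef.one.smul hγ).of_le (smul_one_le_designMatrix w hα k)

theorem trace_designMatrix_le {L : ℝ} (hα : 0 ≤ α) (hw : ∀ t, w t ⬝ᵥ w t ≤ L) :
    (designMatrix γ α w n).trace ≤ γ * Fintype.card m + α * (n * L) := by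
  have hfilter : univ.filter (fun t : Fin n => (t : ℕ) < n) = univ :=
    filter_true_of_mem fun t _ => t.isLt
  rw [designMatrix, hfilter, trace_add, trace_smul, trace_smul, trace_one, trace_sum]
  simp only [trace_vecMulVec, smul_eq_mul]
  gcongr
  simpa using sum_le_sum fun t (_ : t ∈ univ) => hw t

theorem sum_log_one_add_eq_log_det_sub (hγ : 0 < γ) (hα : 0 ≤ α) :
    ∑ k : Fin n, Real.log (1 + α * (w k ⬝ᵥ (designMatrix γ α w k)⁻¹ *ᵥ w k))
      = Real.log (designMatrix γ α w n).det - Real.log (designMatrix γ α w 0).det := by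
  have hstep : ∀ k : Fin n, Real.log (1 + α * (w k ⬝ᵥ (designMatrix γ α w k)⁻¹ *ᵥ w k))
      = Real.log (designMatrix γ α w (k + 1)).det - Real.log (designMatrix γ α w k).det := by
    intro k
    have hH := designMatrix_posDef w hγ hα k
    have hdet : (designMatrix γ α w (k + 1)).det
        = (designMatrix γ α w k).det * (1 + α * (w k ⬝ᵥ (designMatrix γ α w k)⁻¹ *ᵥ w k)) := by
      rw [designMatrix_succ, ← smul_vecMulVec, det_add_vecMulVec hH.det_pos.ne'.isUnit,
        mulVec_smul, dotProduct_smul, smul_eq_mul]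
    have hpos : 0 < 1 + α * (w k ⬝ᵥ (designMatrix γ α w k)⁻¹ *ᵥ w k) := by
      have := hH.dotProduct_inv_mulVec_nonneg (w k)
      positivity
    rw [hdet, Real.log_mul hH.det_pos.ne' hpos.ne']
    ring
  rw [sum_congr rfl fun k _ => hstep k,
    Fin.sum_univ_eq_sum_range (fun k => Real.log (designMatrix γ α w (k + 1)).det
      - Real.log (designMatrix γ α w k).det)]
  exact sum_range_sub (fun k => Real.log (designMatrix γ α w k).det) n

theorem log_det_designMatrix_sub_le [Nonempty m] {L : ℝ} (hγ : 0 < γ) (hα : 0 ≤ α)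
    (hw : ∀ t, w t ⬝ᵥ w t ≤ L) :
    Real.log (designMatrix γ α w n).det - Real.log (designMatrix γ α w 0).det
      ≤ Fintype.card m * Real.log (1 + α * n * L / (γ * Fintype.card m)) := by
  have hc : (0 : ℝ) < Fintype.card m := by exact_mod_cast Fintype.card_pos
  set c : ℝ := (Fintype.card m : ℝ)
  have hH := designMatrix_posDef w hγ hα n
  have htr := trace_designMatrix_le (γ := γ) w hα hw
  have hfactor : (γ * c + α * (n * L)) / c = γ * (1 + α * n * L / (γ * c)) := by
    field_simp
  have hpos : 0 < 1 + α * n * L / (γ * c) := by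
    refine pos_of_mul_pos_right ?_ hγ.le
    rw [← hfactor]
    have := hH.trace_pos.trans_le htr
    positivity
  calc Real.log (designMatrix γ α w n).det - Real.log (designMatrix γ α w 0).det
      ≤ c * Real.log ((designMatrix γ α w n).trace / c) - c * Real.log γ := by
        rw [designMatrix_zero, det_smul, det_one, mul_one, Real.log_pow]
        gcongr
        exact hH.log_det_le
    _ ≤ c * Real.log ((γ * c + α * (n * L)) / c) - c * Real.log γ := by
        have := hH.trace_pos
        gcongr
    _ = c * Real.log (1 + α * n * L / (γ * c)) := by
        rw [hfactor, Real.log_mul hγ.ne' hpos.ne']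
        ring

theorem sum_dotProduct_inv_designMatrix_mulVec_le [Nonempty m] {L : ℝ} (hγ : 0 < γ) (hα : 0 < α)
    (hL : 0 ≤ L) (hw : ∀ t, w t ⬝ᵥ w t ≤ L) :
    ∑ k : Fin n, w k ⬝ᵥ (designMatrix γ α w k)⁻¹ *ᵥ w k
      ≤ (1 + α * L / γ) / α
          * (Fintype.card m * Real.log (1 + α * n * L / (γ * Fintype.card m))) := by
  set e := fun k : Fin n => w k ⬝ᵥ (designMatrix γ α w k)⁻¹ *ᵥ w k
  have he_nonneg : ∀ k, 0 ≤ e k := fun k =>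
    (designMatrix_posDef w hγ hα.le k).dotProduct_inv_mulVec_nonneg (w k)
  have he_le : ∀ k, e k ≤ L / γ := fun k =>
    calc e k ≤ (w k ⬝ᵥ w k) / γ := by
          simpa using PosDef.one.dotProduct_inv_mulVec_le_of_smul_le hγ
            (smul_one_le_designMatrix w hα.le k) (w k)
      _ ≤ L / γ := by gcongr; exact hw k
  have hterm : ∀ k, α * e k ≤ (1 + α * L / γ) * Real.log (1 + α * e k) := fun k =>
    Real.le_mul_log_one_add (mul_nonneg hα.le (he_nonneg k))
      (by rw [mul_div_assoc]; gcongr; exact he_le k)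
  rw [div_mul_eq_mul_div, le_div_iff₀ hα, mul_comm, mul_sum]
  calc ∑ k, α * e k ≤ ∑ k, (1 + α * L / γ) * Real.log (1 + α * e k) :=
        sum_le_sum fun k _ => hterm k
    _ = (1 + α * L / γ)
          * (Real.log (designMatrix γ α w n).det - Real.log (designMatrix γ α w 0).det) := by
        rw [← mul_sum, sum_log_one_add_eq_log_det_sub w hγ hα.le]
    _ ≤ _ := by
        gcongr
        exact log_det_designMatrix_sub_le w hγ hα.le hw

theorem natCast_mul_dotProduct_inv_designMatrix_mulVec_le (hγ : 0 < γ) (hα : 0 ≤ α) {κ : ℝ}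
    (x : m → ℝ) (hdiv : ∀ k : Fin n, x ⬝ᵥ (designMatrix γ α w k)⁻¹ *ᵥ x
      ≤ κ * (w k ⬝ᵥ (designMatrix γ α w k)⁻¹ *ᵥ w k)) :
    n * (x ⬝ᵥ (designMatrix γ α w n)⁻¹ *ᵥ x)
      ≤ κ * ∑ k : Fin n, w k ⬝ᵥ (designMatrix γ α w k)⁻¹ *ᵥ w k := by
  rw [mul_sum]
  simpa using sum_le_sum (s := (univ : Finset (Fin n))) fun k _ =>
    ((designMatrix_posDef w hγ hα k).dotProduct_inv_mulVec_le_of_le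
      (designMatrix_mono w hα k.isLt.le) x).trans (hdiv k)

end DesignMatrix

theorem centered_leverage_score_decay_general {d n N : ℕ} (hd : 0 < d) (hn : 0 < n)
    (φ : Fin N → Fin d → ℝ) (φbar : Fin d → ℝ) (q : Fin N → ℝ) (qmin : ℝ)
    (hqmin : 0 < qmin) (hq : ∀ i, qmin ≤ q i)
    (v : Fin N → Fin d → ℝ)
    (hvdef : ∀ i, v i = fun j => Real.sqrt (q i) * (φ i j - φbar j))
    (L γ α κ ρ : ℝ) (hL : ∀ i, ∑ j, v i j ^ 2 ≤ L)
    (hγ : 0 < γ) (hα : 0 < α) (hκ : 1 ≤ κ) (hρ0 : 0 < ρ)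
    (idx : Fin n → Fin N)
    (H : Fin (n + 1) → Matrix (Fin d) (Fin d) ℝ)
    (hH : ∀ k : Fin (n + 1),
        H k = γ • (1 : Matrix (Fin d) (Fin d) ℝ)
          + α • ∑ t ∈ Finset.univ.filter (fun t : Fin n => (t : ℕ) < (k : ℕ)),
              Matrix.vecMulVec (v (idx t)) (v (idx t)))
    (hdiv : ∀ i, ∀ k : Fin n,
        v i ⬝ᵥ (H k.castSucc)⁻¹ *ᵥ v i
          ≤ κ * (v (idx k) ⬝ᵥ (H k.castSucc)⁻¹ *ᵥ v (idx k)))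
    (Sn : Matrix (Fin d) (Fin d) ℝ)
    (hfc : (Sn - ρ • H (Fin.last n)).PosSemidef) :
    ∀ i, (φ i - φbar) ⬝ᵥ Sn⁻¹ *ᵥ (φ i - φbar)
      ≤ (κ / (ρ * qmin)) * ((1 + α * L / γ) / α) * ((d : ℝ) / n)
          * Real.log (1 + α * n * L / (γ * d)) := by
  intro i
  set w : Fin n → Fin d → ℝ := fun t => v (idx t)
  obtain rfl : H = fun k : Fin (n + 1) => designMatrix γ α w k := funext hH
  have : Nonempty (Fin d) := Fin.pos_iff_nonempty.mp hd
  have hw : ∀ t, w t ⬝ᵥ w t ≤ L := fun t => by simpa [dotProduct, sq] using hL (idx t)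
  have hL0 : 0 ≤ L := (sum_nonneg fun j _ => sq_nonneg _).trans (hL (idx ⟨0, hn⟩))
  have hn' : (0 : ℝ) < n := by exact_mod_cast hn
  have hqi : 0 < q i := hqmin.trans_le (hq i)
  have hHn := designMatrix_posDef w hγ hα.le n
  have hcentered : (φ i - φbar) ⬝ᵥ Sn⁻¹ *ᵥ (φ i - φbar) = (v i ⬝ᵥ Sn⁻¹ *ᵥ v i) / q i := by
    have hv : v i = Real.sqrt (q i) • (φ i - φbar) := hvdef i
    simp only [hv, smul_dotProduct, mulVec_smul, dotProduct_smul, smul_eq_mul]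
    rw [← mul_assoc, Real.mul_self_sqrt hqi.le, mul_div_cancel_left₀ _ hqi.ne']
  have hSn_nonneg := ((hHn.smul hρ0).of_le hfc).dotProduct_inv_mulVec_nonneg (v i)
  have hfisher := hHn.dotProduct_inv_mulVec_le_of_smul_le hρ0 hfc (v i)
  have hdiversity := natCast_mul_dotProduct_inv_designMatrix_mulVec_le w hγ hα.le (v i) (hdiv i)
  have hpotential := sum_dotProduct_inv_designMatrix_mulVec_le w hγ hα hL0 hw
  rw [Fintype.card_fin] at hpotential
  rw [hcentered]
  calc (v i ⬝ᵥ Sn⁻¹ *ᵥ v i) / q i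
      ≤ (v i ⬝ᵥ Sn⁻¹ *ᵥ v i) / qmin := div_le_div_of_nonneg_left hSn_nonneg hqmin (hq i)
    _ ≤ κ * ((1 + α * L / γ) / α * (d * Real.log (1 + α * n * L / (γ * d)))) / n / ρ / qmin := by
        have hκ0 : 0 ≤ κ := zero_le_one.trans hκ
        gcongr
        refine hfisher.trans (div_le_div_of_nonneg_right ?_ hρ0.le)
        rw [le_div_iff₀' hn']
        exact hdiversity.trans (by gcongr)
    _ = _ := by field_simp

theorem centered_leverage_score_decay {d n N : ℕ} (hd : 0 < d) (hn : 0 < n)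
    (φ : Fin N → Fin d → ℝ) (φbar : Fin d → ℝ) (q : Fin N → ℝ) (qmin : ℝ)
    (hqmin : 0 < qmin) (hq : ∀ i, qmin ≤ q i) (hq1 : ∀ i, q i ≤ 1)
    (v : Fin N → Fin d → ℝ)
    (hvdef : ∀ i, v i = fun j => Real.sqrt (q i) * (φ i j - φbar j))
    (L γ α κ ρ : ℝ) (hL : ∀ i, ∑ j, v i j ^ 2 ≤ L)
    (hγ : 0 < γ) (hα : 0 < α) (hκ : 1 ≤ κ) (hρ0 : 0 < ρ) (hρ1 : ρ ≤ 1)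
    (idx : Fin n → Fin N)
    (H : Fin (n + 1) → Matrix (Fin d) (Fin d) ℝ)
    (hH : ∀ k : Fin (n + 1),
        H k = γ • (1 : Matrix (Fin d) (Fin d) ℝ)
          + α • ∑ t ∈ Finset.univ.filter (fun t : Fin n => (t : ℕ) < (k : ℕ)),
              Matrix.vecMulVec (v (idx t)) (v (idx t)))
    (hdiv : ∀ i, ∀ k : Fin n,
        v i ⬝ᵥ (H k.castSucc)⁻¹ *ᵥ v i
          ≤ κ * (v (idx k) ⬝ᵥ (H k.castSucc)⁻¹ *ᵥ v (idx k)))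
    (Sn : Matrix (Fin d) (Fin d) ℝ) (hSpd : Sn.PosDef)
    (hfc : (Sn - ρ • H (Fin.last n)).PosSemidef) :
    ∀ i, (φ i - φbar) ⬝ᵥ Sn⁻¹ *ᵥ (φ i - φbar)
      ≤ (κ / (ρ * qmin)) * ((1 + α * L / γ) / α) * ((d : ℝ) / n)
          * Real.log (1 + α * n * L / (γ * d)) :=
  centered_leverage_score_decay_general hd hn φ φbar q qmin hqmin hq v hvdef L γ α κ ρ hL hγ hα hκ
    hρ0 idx H hH hdiv Sn hfc
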